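/- Let φ be a GLP_≺ formula whose occurring modalities in ≺-increasing order are λ₀ ≺ λ₁ ≺ … ≺ λ_N, and let φ̄ be the condensation of φ obtained by simultaneously replacing each occurrence of [λᵢ] by [i]. If GLP_≺ ⊬ φ, then GLP_ω ⊬ φ̄. -/
import Mathlib


/-!
A formalization of the framework of Fernández-Duque & Joosten,
"The omega-rule interpretation of transfinite provability logic".

We give a deep embedding of the two-sorted language `L²∀` of second-order
arithmetic.  Number variables and (monadic) set variables are indexed by `ℕ`.
The set variable with index `0` is reserved for the binary relation `≺`
(coded via `Nat.pair`).  Following the paper, the term language contains,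
besides `0, S, +, ×`, some auxiliary coding functions: a pairing term, a term
`subnum` computing (the code of) the result of substituting a numeral into
(the formula coded by) its first argument, terms `impC`/`allC` computing codes
of implications and universal closures, and a term `boxC` computing the code
of the formula `[λ]^≺_T φ` from the codes of `λ` and `φ`.

Theories are sets of formulas; provability `Prov` is via Hilbert-style
derivations (two-sorted predicate logic together with Robinson's Arithmetic),
coded as lists of formulas, so that derivations have Gödel codes.
-/

namespace SOA

mutual
inductive Term : Type
  | var  : ℕ → Term
  | zero : Term
  | succ : Term → Term
  | add  : Term → Term → Term
  | mul  : Term → Term → Term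
  | pair : Term → Term → Term
  /-- `subnum s t` codes the result of substituting the numeral of (the value
  of) `t` for the variable `v₀` in the formula coded by (the value of) `s`. -/
  | subnum : Term → Term → Term
  /-- `impC s t` codes the implication of the formulas coded by `s` and `t`. -/
  | impC : Term → Term → Term
  /-- `allC s` codes `∀v₀ ψ` where `ψ` is coded by `s`. -/
  | allC : Term → Term
  /-- `boxC P s t` codes the formula `[s]^≺_T t` (iterated ω-rule provability
  for the theory represented by the proof predicate `P`). -/
  | boxC : Formula → Term → Term → Term

inductive Formula : Type
  | falsum : Formula
  | eq  : Term → Term → Formula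
  | lt  : Term → Term → Formula
  /-- `mem t k` : the value of `t` belongs to the set variable `X_k`. -/
  | mem : Term → ℕ → Formula
  | imp : Formula → Formula → Formula
  | all : ℕ → Formula → Formula
  | allSet : ℕ → Formula → Formula
end

instance : Nonempty Formula := ⟨Formula.falsum⟩

namespace Formula
def neg (a : Formula) : Formula := imp a falsum
def and (a b : Formula) : Formula := neg (imp a (neg b))
def or (a b : Formula) : Formula := imp (neg a) b
def iff (a b : Formula) : Formula := and (imp a b) (imp b a)
def ex (x : ℕ) (a : Formula) : Formula := neg (all x (neg a))
def exSet (k : ℕ) (a : Formula) : Formula := neg (allSet k (neg a))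
end Formula

/-- The numeral `n̄`. -/
def numeral : ℕ → Term
  | 0 => .zero
  | n + 1 => .succ (numeral n)

/-! ### Substitution and free variables -/

mutual
/-- Substitute the term `s` for the number variable `x` in a term. -/
def substT (x : ℕ) (s : Term) : Term → Term
  | .var n => if n = x then s else .var n
  | .zero => .zero
  | .succ t => .succ (substT x s t)
  | .add a b => .add (substT x s a) (substT x s b)
  | .mul a b => .mul (substT x s a) (substT x s b)
  | .pair a b => .pair (substT x s a) (substT x s b)
  | .subnum a b => .subnum (substT x s a) (substT x s b)
  | .impC a b => .impC (substT x s a) (substT x s b)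
  | .allC a => .allC (substT x s a)
  | .boxC P a b => .boxC P (substT x s a) (substT x s b)

/-- Substitute the term `s` for the number variable `x` in a formula. -/
def substF (x : ℕ) (s : Term) : Formula → Formula
  | .falsum => .falsum
  | .eq a b => .eq (substT x s a) (substT x s b)
  | .lt a b => .lt (substT x s a) (substT x s b)
  | .mem t k => .mem (substT x s t) k
  | .imp a b => .imp (substF x s a) (substF x s b)
  | .all y a => if y = x then .all y a else .all y (substF x s a)
  | .allSet k a => .allSet k (substF x s a)
end

mutual
/-- Number variables occurring in a term. -/
def fvT : Term → Set ℕ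
  | .var n => {n}
  | .zero => ∅
  | .succ t => fvT t
  | .add a b => fvT a ∪ fvT b
  | .mul a b => fvT a ∪ fvT b
  | .pair a b => fvT a ∪ fvT b
  | .subnum a b => fvT a ∪ fvT b
  | .impC a b => fvT a ∪ fvT b
  | .allC a => fvT a
  | .boxC _ a b => fvT a ∪ fvT b

/-- Free number variables of a formula. -/
def fvF : Formula → Set ℕ
  | .falsum => ∅
  | .eq a b => fvT a ∪ fvT b
  | .lt a b => fvT a ∪ fvT b
  | .mem t _ => fvT t
  | .imp a b => fvF a ∪ fvF b
  | .all y a => fvF a \ {y}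
  | .allSet _ a => fvF a
end

/-- Free set variables of a formula. -/
def fsF : Formula → Set ℕ
  | .falsum => ∅
  | .eq _ _ => ∅
  | .lt _ _ => ∅
  | .mem _ k => {k}
  | .imp a b => fsF a ∪ fsF b
  | .all _ a => fsF a
  | .allSet k a => fsF a \ {k}

/-- `Substl s x φ`: the term `s` is substitutable (capture-free) for the
number variable `x` in `φ`. -/
def Substl (s : Term) (x : ℕ) : Formula → Prop
  | .falsum => True
  | .eq _ _ => True
  | .lt _ _ => True
  | .mem _ _ => True
  | .imp a b => Substl s x a ∧ Substl s x b
  | .all y a => x ∉ fvF (.all y a) ∨ (y ∉ fvT s ∧ Substl s x a)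
  | .allSet _ a => Substl s x a

/-- Rename the free set variable `k` to `j`. -/
def substS (k j : ℕ) : Formula → Formula
  | .falsum => .falsum
  | .eq a b => .eq a b
  | .lt a b => .lt a b
  | .mem t m => .mem t (if m = k then j else m)
  | .imp a b => .imp (substS k j a) (substS k j b)
  | .all y a => .all y (substS k j a)
  | .allSet m a => if m = k then .allSet m a else .allSet m (substS k j a)

/-- The set variable `j` is substitutable for `k` in `φ`. -/
def SubstlS (j k : ℕ) : Formula → Prop
  | .falsum => True
  | .eq _ _ => True
  | .lt _ _ => True
  | .mem _ _ => True
  | .imp a b => SubstlS j k a ∧ SubstlS j k b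
  | .all _ a => SubstlS j k a
  | .allSet m a => k ∉ fsF (.allSet m a) ∨ (m ≠ j ∧ SubstlS j k a)

/-! ### Gödel numbering -/

mutual
/-- Gödel numbering of terms. -/
def encT : Term → ℕ
  | .var n => Nat.pair 0 n
  | .zero => Nat.pair 1 0
  | .succ t => Nat.pair 2 (encT t)
  | .add a b => Nat.pair 3 (Nat.pair (encT a) (encT b))
  | .mul a b => Nat.pair 4 (Nat.pair (encT a) (encT b))
  | .pair a b => Nat.pair 5 (Nat.pair (encT a) (encT b))
  | .subnum a b => Nat.pair 6 (Nat.pair (encT a) (encT b))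
  | .impC a b => Nat.pair 7 (Nat.pair (encT a) (encT b))
  | .allC a => Nat.pair 8 (encT a)
  | .boxC P a b => Nat.pair 9 (Nat.pair (encF P) (Nat.pair (encT a) (encT b)))

/-- Gödel numbering of formulas. -/
def encF : Formula → ℕ
  | .falsum => Nat.pair 0 0
  | .eq a b => Nat.pair 1 (Nat.pair (encT a) (encT b))
  | .lt a b => Nat.pair 2 (Nat.pair (encT a) (encT b))
  | .mem t k => Nat.pair 3 (Nat.pair (encT t) k)
  | .imp a b => Nat.pair 4 (Nat.pair (encF a) (encF b))
  | .all x a => Nat.pair 5 (Nat.pair x (encF a))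
  | .allSet k a => Nat.pair 6 (Nat.pair k (encF a))
end

/-- Decoding of formulas (a left inverse of `encF`). -/
noncomputable def decF : ℕ → Formula := Function.invFun encF

/-- Gödel numbering of (lists of formulas, representing) derivations. -/
def encL (l : List Formula) : ℕ := l.foldr (fun a n => Nat.pair (encF a) n + 1) 0

/-! ### The logical calculus: two-sorted predicate logic + Robinson Arithmetic -/

/-- Logical axioms (including Robinson's Arithmetic and equality axioms). -/
inductive LogAx : Formula → Prop
  | p1 (a b) : LogAx (.imp a (.imp b a))
  | p2 (a b c) : LogAx (.imp (.imp a (.imp b c)) (.imp (.imp a b) (.imp a c)))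
  | dne (a) : LogAx (.imp (.imp (.imp a .falsum) .falsum) a)
  | allElim (x t a) : Substl t x a → LogAx (.imp (.all x a) (substF x t a))
  | allDist (x a b) : LogAx (.imp (.all x (.imp a b)) (.imp (.all x a) (.all x b)))
  | allVac (x a) : x ∉ fvF a → LogAx (.imp a (.all x a))
  | setElim (k j a) : SubstlS j k a → LogAx (.imp (.allSet k a) (substS k j a))
  | setDist (k a b) : LogAx (.imp (.allSet k (.imp a b)) (.imp (.allSet k a) (.allSet k b)))
  | setVac (k a) : k ∉ fsF a → LogAx (.imp a (.allSet k a))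
  | eqRefl (t) : LogAx (.eq t t)
  | eqSubst (x s t a) : Substl s x a → Substl t x a →
      LogAx (.imp (.eq s t) (.imp (substF x s a) (substF x t a)))
  | q1 : LogAx (.all 0 (.neg (.eq (.succ (.var 0)) .zero)))
  | q2 : LogAx (.all 0 (.all 1 (.imp (.eq (.succ (.var 0)) (.succ (.var 1)))
      (.eq (.var 0) (.var 1)))))
  | q3 : LogAx (.all 0 (.imp (.neg (.eq (.var 0) .zero)) (.ex 1 (.eq (.var 0) (.succ (.var 1))))))
  | q4 : LogAx (.all 0 (.eq (.add (.var 0) .zero) (.var 0)))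
  | q5 : LogAx (.all 0 (.all 1 (.eq (.add (.var 0) (.succ (.var 1)))
      (.succ (.add (.var 0) (.var 1))))))
  | q6 : LogAx (.all 0 (.eq (.mul (.var 0) .zero) .zero))
  | q7 : LogAx (.all 0 (.all 1 (.eq (.mul (.var 0) (.succ (.var 1)))
      (.add (.mul (.var 0) (.var 1)) (.var 0)))))
  | qlt : LogAx (.all 0 (.all 1 (.iff (.lt (.var 0) (.var 1))
      (.ex 2 (.eq (.add (.succ (.var 2)) (.var 0)) (.var 1))))))

/-- The `i`-th entry of `l` is justified as a step of a Hilbert-style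
derivation from the theory `T`: it is an axiom of `T`, a logical axiom, or it
follows from earlier entries by Modus Ponens or Generalization (for either
sort). -/
def Justified (T : Set Formula) (l : List Formula) (i : ℕ) : Prop :=
  ∃ φ, l[i]? = some φ ∧
    (φ ∈ T ∨ LogAx φ ∨
      (∃ j k ψ, j < i ∧ k < i ∧ l[j]? = some ψ ∧ l[k]? = some (Formula.imp ψ φ)) ∨
      (∃ j ψ x, j < i ∧ l[j]? = some ψ ∧ φ = Formula.all x ψ) ∨
      (∃ j ψ k, j < i ∧ l[j]? = some ψ ∧ φ = Formula.allSet k ψ))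

/-- `l` is a derivation from the theory `T`. -/
def IsDeriv (T : Set Formula) (l : List Formula) : Prop :=
  l ≠ [] ∧ ∀ i < l.length, Justified T l i

/-- `φ` is provable from the theory `T` (in two-sorted predicate logic with
Robinson's Arithmetic). -/
def Prov (T : Set Formula) (φ : Formula) : Prop :=
  ∃ l, IsDeriv T l ∧ l.getLast? = some φ

/-- `T` is consistent. -/
def Con (T : Set Formula) : Prop := ¬ Prov T .falsum

/-- `ProofCode T d f`: `d` is the code of a derivation in `T` of the formula
coded by `f`. -/
def ProofCode (T : Set Formula) (d f : ℕ) : Prop :=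
  ∃ (l : List Formula) (φ : Formula),
    IsDeriv T l ∧ l.getLast? = some φ ∧ d = encL l ∧ f = encF φ

/-! ### Formula classes -/

/-- `Δ̂⁰₀` formulas: only bounded number quantifiers and no set variables. -/
inductive IsDelta0 : Formula → Prop
  | falsum : IsDelta0 .falsum
  | eq (a b) : IsDelta0 (.eq a b)
  | lt (a b) : IsDelta0 (.lt a b)
  | imp {a b} : IsDelta0 a → IsDelta0 b → IsDelta0 (.imp a b)
  | ball {a} (x t) : IsDelta0 a → IsDelta0 (.all x (.imp (.lt (.var x) t) a))

/-- `Δ⁰₀` formulas (set parameters allowed). -/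
inductive IsDelta0p : Formula → Prop
  | falsum : IsDelta0p .falsum
  | eq (a b) : IsDelta0p (.eq a b)
  | lt (a b) : IsDelta0p (.lt a b)
  | mem (t k) : IsDelta0p (.mem t k)
  | imp {a b} : IsDelta0p a → IsDelta0p b → IsDelta0p (.imp a b)
  | ball {a} (x t) : IsDelta0p a → IsDelta0p (.all x (.imp (.lt (.var x) t) a))

/-- `Σ̂⁰₁` formulas (no free set variables). -/
def IsSigma1 (σ : Formula) : Prop := ∃ x δ, IsDelta0 δ ∧ (σ = .ex x δ ∨ σ = δ)

/-- `Σ⁰₁` formulas (set parameters allowed). -/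
def IsSigma1p (σ : Formula) : Prop := ∃ x δ, IsDelta0p δ ∧ (σ = .ex x δ ∨ σ = δ)

/-- Arithmetic (`Π⁰ω`) formulas: no set quantifiers (set parameters allowed). -/
def IsArith : Formula → Prop
  | .imp a b => IsArith a ∧ IsArith b
  | .all _ a => IsArith a
  | .allSet _ _ => False
  | _ => True

/-! ### The iterated provability formulas -/

/-- `s ≺ t`, where the relation coded (via pairing) by the set variable `X_r`. -/
def precAt (r : ℕ) (s t : Term) : Formula := .mem (.pair s t) r

/-- `s ≺ t`, where `≺` is the designated set variable `X₀`. -/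
def precF (s t : Term) : Formula := precAt 0 s t

/-- `□_T t` : the formula coded by (the value of) `t` is provable in `T`,
where `P` is the `Δ̂⁰₀` proof predicate of `T` (with free variables `v₀`
for the derivation and `v₁` for the formula). -/
def BoxF (P : Formula) (t : Term) : Formula :=
  .ex 1 (.and (.eq (.var 1) t) (.ex 0 P))

/-- The formula `IPC^≺_T(X)`, for a "class" `X` given by the membership
formula `M`: for all `z`, `M z` holds iff `z = ⟨λ,φ⟩` where either `□_T φ`,
or there are `ψ` and `ξ ≺ λ` such that `M ⟨ξ, ψ(n̄)⟩` for every `n` and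
`□_T (∀x ψ(x) → φ)`. -/
def IPCmem (P : Formula) (M : Term → Formula) : Formula :=
  .all 2 (.iff (M (.var 2))
    (.ex 3 (.ex 4 (.and (.eq (.var 2) (.pair (.var 3) (.var 4)))
      (.or (BoxF P (.var 4))
        (.ex 5 (.ex 6 (.and (precF (.var 6) (.var 3))
          (.and (.all 7 (M (.pair (.var 6) (.subnum (.var 5) (.var 7)))))
            (BoxF P (.impC (.allC (.var 5)) (.var 4))))))))))))

/-- `IPC^≺_T(X_k)` : the set variable `X_k` is an iterated provability class
for the theory with proof predicate `P`, along the order `≺` (= `X₀`). -/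
def IPCat (P : Formula) (k : ℕ) : Formula := IPCmem P (fun t => .mem t k)

/-- `[l]^≺_T f` for terms `l` (the ordinal) and `f` (the code of a formula):
`∀X (IPC^≺_T(X) → ⟨l,f⟩ ∈ X)`. -/
def BoxIterT (P : Formula) (l f : Term) : Formula :=
  .allSet 1 (.imp (IPCat P 1) (.mem (.pair l f) 1))

/-- `[λ]^≺_T φ` : iterated ω-rule provability of `φ`, `λ` nested applications
of the ω-rule along `≺`. -/
def boxIter (P : Formula) (lam : ℕ) (φ : Formula) : Formula :=
  BoxIterT P (numeral lam) (numeral (encF φ))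

/-- A term computing the code of the negation of the formula coded by `t`. -/
def negC (t : Term) : Term := .impC t (numeral (encF .falsum))

/-- `⟨l⟩^≺_T f = ¬[l]^≺_T ¬f` for terms `l`, `f`. -/
def DiaIterT (P : Formula) (l f : Term) : Formula := .neg (BoxIterT P l (negC f))

/-- `⟨λ⟩^≺_T φ`. -/
def diaIter (P : Formula) (lam : ℕ) (φ : Formula) : Formula :=
  .neg (boxIter P lam (.neg φ))

/-- A term computing the code of `⟨l⟩^≺_T f` from terms `l`, `f`. -/
def diaCodeT (P : Formula) (l f : Term) : Term := negC (.boxC P l (negC f))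

/-- The introspection axiom `∃X IPC^≺_T(X)`. -/
def introAx (P : Formula) : Formula := .exSet 1 (IPCat P 1)

/-! ### Well-orders, and some standard systems of second-order arithmetic -/

/-- `≺` (coded by `X_r`) is a linear (strict total) order. -/
def linFat (r : ℕ) : Formula :=
  .and (.all 2 (.and (.neg (precAt r (.var 2) (.var 2)))
         (.all 3 (.or (precAt r (.var 2) (.var 3))
           (.or (precAt r (.var 3) (.var 2)) (.eq (.var 3) (.var 2)))))))
       (.all 2 (.all 3 (.all 4 (.imp (.and (precAt r (.var 2) (.var 3))
         (precAt r (.var 3) (.var 4))) (precAt r (.var 2) (.var 4))))))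

/-- `wo(≺)` for the relation coded by `X_r` (`X` the bound set variable):
`≺` is linear and every nonempty set has a `≺`-minimal element. -/
def woFat (r X : ℕ) : Formula :=
  .and (linFat r) (.allSet X (.imp (.ex 2 (.mem (.var 2) X))
    (.ex 3 (.all 4 (.imp (precAt r (.var 4) (.var 3)) (.neg (.mem (.var 4) X)))))))

/-- `wo(≺)` for the designated order `≺` (= `X₀`). -/
def woF : Formula := woFat 0 1

/-- The comprehension instance `∃X_k ∀x (x ∈ X_k ↔ φ)`. -/
def CAinst (k x : ℕ) (φ : Formula) : Formula :=
  .exSet k (.all x (.iff (.mem (.var x) k) φ))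

/-- The set induction axiom `Ind`. -/
def IndAx : Formula :=
  .allSet 1 (.imp (.all 2 (.imp (.all 3 (.imp (.lt (.var 3) (.var 2))
      (.mem (.var 3) 1))) (.mem (.var 2) 1)))
    (.all 2 (.mem (.var 2) 1)))

/-- The induction axiom instance `φ(0) ∧ ∀x(φ(x) → φ(x+1)) → ∀x φ(x)`. -/
def IndInst (x : ℕ) (φ : Formula) : Formula :=
  .imp (.and (substF x .zero φ) (.all x (.imp φ (substF x (.succ (.var x)) φ))))
       (.all x φ)

/-- `ACA₀ = Ind + Π⁰ω-CA`. -/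
def ACA0 : Set Formula :=
  insert IndAx { ψ | ∃ k x φ, IsArith φ ∧ k ∉ fsF φ ∧ ψ = CAinst k x φ }

/-- `U` extends `ACA₀`. -/
def ExtACA0 (U : Set Formula) : Prop := ∀ φ ∈ ACA0, Prov U φ

/-- `RCA₀ = I-Σ⁰₁ + Δ⁰₀-CA`. -/
def RCA0 : Set Formula :=
  { ψ | ∃ x φ, IsSigma1p φ ∧ ψ = IndInst x φ } ∪
  { ψ | ∃ k x φ, IsDelta0p φ ∧ k ∉ fsF φ ∧ ψ = CAinst k x φ }

/-- The `Δ̂⁰₀` comprehension scheme (no set parameters). -/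
def Delta0HatCA : Set Formula :=
  { ψ | ∃ k x φ, IsDelta0 φ ∧ ψ = CAinst k x φ }

/-- The `Δ⁰₀` comprehension scheme (set parameters allowed). -/
def Delta0pCA : Set Formula :=
  { ψ | ∃ k x φ, IsDelta0p φ ∧ k ∉ fsF φ ∧ ψ = CAinst k x φ }

/-! ### Semantics in the standard model -/

/-- Evaluation of terms in the standard model under the number-variable
assignment `v`. -/
noncomputable def evT (v : ℕ → ℕ) : Term → ℕ
  | .var n => v n
  | .zero => 0
  | .succ t => evT v t + 1
  | .add a b => evT v a + evT v b
  | .mul a b => evT v a * evT v b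
  | .pair a b => Nat.pair (evT v a) (evT v b)
  | .subnum a b => encF (substF 0 (numeral (evT v b)) (decF (evT v a)))
  | .impC a b => encF (.imp (decF (evT v a)) (decF (evT v b)))
  | .allC a => encF (.all 0 (decF (evT v a)))
  | .boxC P a b => encF (BoxIterT P (numeral (evT v a)) (numeral (evT v b)))

/-- Truth in the (full) standard model, under the number-variable assignment
`v` and the set-variable assignment `S`. -/
def EvF : (ℕ → ℕ) → (ℕ → Set ℕ) → Formula → Prop
  | _, _, .falsum => (False : Prop)
  | v, _, .eq a b => evT v a = evT v b
  | v, _, .lt a b => evT v a < evT v b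
  | v, S, .mem t k => evT v t ∈ S k
  | v, S, .imp a b => EvF v S a → EvF v S b
  | v, S, .all x a => ∀ n : ℕ, EvF (Function.update v x n) S a
  | v, S, .allSet k a => ∀ A : Set ℕ, EvF v (Function.update S k A) a

/-- The graph (set of codes of pairs) of a binary relation on `ℕ`. -/
def relSet (R : ℕ → ℕ → Prop) : Set ℕ := {p | ∃ a b, p = Nat.pair a b ∧ R a b}

/-- `T` is sound (all its theorems are true in the standard model), where the
designated set variable `X₀` is interpreted as the fixed relation `R`. -/
def SoundFor (R : ℕ → ℕ → Prop) (T : Set Formula) : Prop :=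
  ∀ φ, Prov T φ → ∀ (v : ℕ → ℕ) (S : ℕ → Set ℕ), S 0 = relSet R → EvF v S φ

/-- `T` is representable via the `Δ̂⁰₀` proof predicate `P` (with free
variables `v₀`, `v₁`): `P(d,f)` holds (in the standard model) iff `d` codes a
derivation in `T` of the formula coded by `f`. -/
def Represents (T : Set Formula) (P : Formula) : Prop :=
  IsDelta0 P ∧
  ∀ (d f : ℕ) (v : ℕ → ℕ) (S : ℕ → Set ℕ),
    (EvF (Function.update (Function.update v 0 d) 1 f) S P ↔ ProofCode T d f)

/-- The formula `σ` (with free variables `v₀`, `v₁`) defines the relation `R`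
in the standard model. -/
def DefinesRel (σ : Formula) (R : ℕ → ℕ → Prop) : Prop :=
  ∀ (a b : ℕ) (v : ℕ → ℕ) (S : ℕ → Set ℕ),
    (EvF (Function.update (Function.update v 0 a) 1 b) S σ ↔ R a b)

/-- The axiom `∀x∀y (x ≺ y ↔ σ(x,y))` expressing that `≺` is (defined by) the
formula `σ`. -/
def precDefAx (σ : Formula) : Formula :=
  .all 0 (.all 1 (.iff (precF (.var 0) (.var 1)) σ))

/-! ### The modal language and the logics `GLP_≺` -/

/-- Modal formulas of the language `L_[·]`, with a modality `[ξ]` for each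
natural number `ξ`. -/
inductive MF : Type
  | var : ℕ → MF
  | bot : MF
  | imp : MF → MF → MF
  | box : ℕ → MF → MF

namespace MF
def neg (a : MF) : MF := imp a bot
def dia (n : ℕ) (a : MF) : MF := neg (box n (neg a))
end MF

/-- Substitution of modal formulas for propositional variables. -/
def msub (σ : ℕ → MF) : MF → MF
  | .var p => σ p
  | .bot => .bot
  | .imp a b => .imp (msub σ a) (msub σ b)
  | .box n a => .box n (msub σ a)

/-- `φ` is a propositional tautology (boxed formulas treated as atoms). -/
def MTaut (φ : MF) : Prop :=
  ∀ w : MF → Prop, ¬ w .bot → (∀ a b, w (.imp a b) ↔ (w a → w b)) → w φ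

/-- The logic `GLP_≺` for a binary relation `R` (`≺`) on the naturals:
propositional tautologies, distribution, Löb's axiom, monotonicity
`⟨ζ⟩φ → ⟨ξ⟩φ` and `⟨ξ⟩φ → [ζ]⟨ξ⟩φ` for `ξ ≺ ζ`, with the rules Modus Ponens,
Substitution and Necessitation. -/
inductive GLP (R : ℕ → ℕ → Prop) : MF → Prop
  | taut {a} : MTaut a → GLP R a
  | k (n a b) : GLP R (.imp (.box n (.imp a b)) (.imp (.box n a) (.box n b)))
  | lob (n a) : GLP R (.imp (.box n (.imp (.box n a) a)) (.box n a))
  | mono {ξ ζ} (a) : R ξ ζ → GLP R (.imp (MF.dia ζ a) (MF.dia ξ a))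
  | stab {ξ ζ} (a) : R ξ ζ → GLP R (.imp (MF.dia ξ a) (.box ζ (MF.dia ξ a)))
  | mp {a b} : GLP R (.imp a b) → GLP R a → GLP R b
  | subst {a} (σ) : GLP R a → GLP R (msub σ a)
  | nec {a} (n) : GLP R a → GLP R (.box n a)

/-- The extension `f^≺_T` of an arithmetic interpretation `f` to all modal
formulas: it commutes with the Booleans and sends `[λ]φ` to `[λ]^≺_T f(φ)`. -/
def interp (P : Formula) (f : ℕ → Formula) : MF → Formula
  | .var p => f p
  | .bot => .falsum
  | .imp a b => .imp (interp P f a) (interp P f b)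
  | .box n a => boxIter P n (interp P f a)

/-- Relabelling of modalities by `g`. -/
def mapMod (g : ℕ → ℕ) : MF → MF
  | .var p => .var p
  | .bot => .bot
  | .imp a b => .imp (mapMod g a) (mapMod g b)
  | .box n a => .box (g n) (mapMod g a)

lemma mapMod_msub (g : ℕ → ℕ) (σ : ℕ → MF) (a : MF) :
    mapMod g (msub σ a) = msub (fun p => mapMod g (σ p)) (mapMod g a) := by
  induction a with
  | var p => rfl
  | bot => rfl
  | imp a b iha ihb => simp [msub, mapMod, iha, ihb]
  | box n a iha => simp [msub, mapMod, iha]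

lemma mtaut_mapMod (g : ℕ → ℕ) {a : MF} (h : MTaut a) : MTaut (mapMod g a) := by
  intro w hbot himp
  have := h (fun b => w (mapMod g b)) hbot (fun a b => himp _ _)
  exact this

lemma glp_mapMod (R : ℕ → ℕ → Prop) (e : ℕ → ℕ)
    (he : ∀ i j, i < j → R (e i) (e j)) {ψ : MF}
    (h : GLP (· < ·) ψ) : GLP R (mapMod e ψ) := by
  induction h with
  | taut ht => exact GLP.taut (mtaut_mapMod e ht)
  | k n a b => exact GLP.k (e n) (mapMod e a) (mapMod e b)
  | lob n a => exact GLP.lob (e n) (mapMod e a)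
  | mono a hlt => exact GLP.mono (mapMod e a) (he _ _ hlt)
  | stab a hlt => exact GLP.stab (mapMod e a) (he _ _ hlt)
  | mp _ _ ih1 ih2 => exact GLP.mp ih1 ih2
  | subst σ _ ih =>
      rw [mapMod_msub]
      exact GLP.subst _ ih
  | nec n _ ih => exact GLP.nec (e n) ih

/-- (Lemma 8.1.) Let `≺` (here `R`) be a linear order on
`ℕ` and let `e` enumerate, `≺`-increasingly, the modalities `λ₀ ≺ … ≺ λ_N`
of `φ = mapMod e ψ`, so that `ψ` is the condensation `φ̄` of `φ` (obtained by
simultaneously replacing each `[λᵢ] = [e i]` by `[i]`).  If `GLP_≺ ⊬ φ`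
then `GLP_ω ⊬ φ̄`. -/
theorem condensation_reflects_unprovability (R : ℕ → ℕ → Prop)
    (hR : IsStrictTotalOrder ℕ R)
    (e : ℕ → ℕ) (he : ∀ i j, i < j → R (e i) (e j)) (ψ : MF)
    (h : ¬ GLP R (mapMod e ψ)) :
    ¬ GLP (· < ·) ψ :=
  fun hp => h (glp_mapMod R e he hp)

end SOA
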